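/- With the setup of the principal gradation of ĝl_N (β_n and x^{(μ)}_n as defined from E^{i,j}_m), for 1 ≤ μ, ν ≤ N-1 with μ + ν ≢ 0 mod N, the commutator satisfies [x^{(μ)}_n, x^{(ν)}_m] = (ω^{-μ m} - ω^{-ν n}) x^{(μ+ν)}_{n+m}, where the superscript μ+ν is taken mod N (with representative in {1,...,N-1}). -/
import Mathlib

/-- The principal Heisenberg element `β_{Nm+ν} = ∑_{i=1}^{N-ν} E^{i,i+ν}_m
+ ∑_{i=N-ν+1}^{N} E^{i,i+ν-N}_{m+1}`, where `n = Nm + ν` with `0 ≤ ν < N`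
(Euclidean division). -/
noncomputable def betaEl {L : Type*} [AddCommGroup L]
    (N : ℕ) (E : ℕ → ℕ → ℤ → L) (n : ℤ) : L :=
  ∑ i ∈ Finset.Icc 1 (N - (n % (N : ℤ)).toNat),
      E i (i + (n % (N : ℤ)).toNat) (n / (N : ℤ)) +
    ∑ i ∈ Finset.Icc (N - (n % (N : ℤ)).toNat + 1) N,
      E i (i + (n % (N : ℤ)).toNat - N) (n / (N : ℤ) + 1)

/-- The principal current modes: for `n = Nm + ν` with `1 ≤ ν ≤ N-1`,
`x^{(μ)}_{Nm+ν} = ∑_{i=1}^{N-ν} ω^{μ(i+ν-1)} E^{i,i+ν}_m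
+ ∑_{i=N-ν+1}^{N} ω^{μ(i+ν-1)} E^{i,i+ν-N}_{m+1}`, and
`x^{(μ)}_{Nm} = ∑_{i=1}^{N-1} ((1-ω^{μi})/(1-ω^μ)) H^i_m - (k/(1-ω^μ)) δ_{m,0}`
with `H^i_m = E^{i,i}_m - E^{i+1,i+1}_m`. -/
noncomputable def xEl {L : Type*} [AddCommGroup L] [Module ℂ L]
    (N : ℕ) (ω : ℂ) (E : ℕ → ℕ → ℤ → L) (K : L) (μ n : ℤ) : L :=
  if n % (N : ℤ) = 0 then
    (∑ i ∈ Finset.Icc 1 (N - 1),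
        ((1 - ω ^ (μ * i)) / (1 - ω ^ μ)) • (E i i (n / (N : ℤ)) - E (i + 1) (i + 1) (n / (N : ℤ))))
      - (if n = 0 then (1 / (1 - ω ^ μ)) • K else 0)
  else
    ∑ i ∈ Finset.Icc 1 (N - (n % (N : ℤ)).toNat),
        ω ^ (μ * ((i : ℤ) + ((n % (N : ℤ)).toNat : ℤ) - 1)) •
          E i (i + (n % (N : ℤ)).toNat) (n / (N : ℤ)) +
      ∑ i ∈ Finset.Icc (N - (n % (N : ℤ)).toNat + 1) N,
        ω ^ (μ * ((i : ℤ) + ((n % (N : ℤ)).toNat : ℤ) - 1)) •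
          E i (i + (n % (N : ℤ)).toNat - N) (n / (N : ℤ) + 1)

namespace XXC

set_option linter.unusedSectionVars false
set_option linter.unusedTactic false

def res (N : ℕ) (a : ℤ) : ℕ := ((a - 1) % (N : ℤ)).toNat + 1
def qt (N : ℕ) (a : ℤ) : ℤ := (a - 1) / (N : ℤ)

variable {N : ℕ} (hN : 0 < N)
include hN

lemma res_cast (a : ℤ) : (res N a : ℤ) = (a - 1) % (N : ℤ) + 1 := by
  have hNz : ((N:ℤ)) ≠ 0 := by positivity
  have : (0:ℤ) ≤ (a-1) % (N:ℤ) := Int.emod_nonneg _ hNz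
  simp [res, Int.toNat_of_nonneg this]

lemma res_spec (a : ℤ) : (res N a : ℤ) = a - (N : ℤ) * qt N a := by
  rw [res_cast hN, qt]
  have := Int.emod_add_mul_ediv (a - 1) (N : ℤ)
  linarith

omit hN in
lemma one_le_res (a : ℤ) : 1 ≤ res N a := Nat.le_add_left 1 _

lemma res_le (a : ℤ) : res N a ≤ N := by
  have h1 : (a-1) % (N:ℤ) < N := Int.emod_lt_of_pos _ (by exact_mod_cast hN)
  have h2 := res_cast hN a
  have : (res N a : ℤ) ≤ N := by omega
  exact_mod_cast this

lemma dvd_sub_res (a : ℤ) : a - (res N a : ℤ) = (N:ℤ) * qt N a := by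
  rw [res_spec hN]; ring

lemma res_unique {j : ℕ} (h1 : 1 ≤ j) (h2 : j ≤ N) {a : ℤ} (hd : (N:ℤ) ∣ a - j) :
    j = res N a := by
  obtain ⟨t, ht⟩ := hd
  have hs := dvd_sub_res hN a
  have hd2 : (N:ℤ) ∣ ((res N a : ℤ) - j) := ⟨t - qt N a, by linarith [mul_sub (N:ℤ) t (qt N a)]⟩
  have h3 := one_le_res (N := N) (a := a)
  have h4 := res_le hN a
  have h5 : ((res N a : ℤ) - j) = 0 := by
    refine Int.eq_zero_of_abs_lt_dvd hd2 ?_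
    rw [abs_lt]
    constructor <;> omega
  omega

lemma res_shift (a t : ℤ) : res N (a + (N:ℤ) * t) = res N a := by
  have hd : (N:ℤ) ∣ (a + (N:ℤ)*t) - (res N a : ℤ) := by
    refine ⟨qt N a + t, ?_⟩
    have := dvd_sub_res hN a
    linarith [mul_add (N:ℤ) (qt N a) t]
  exact (res_unique hN (one_le_res (a := a)) (res_le hN a) hd).symm

lemma qt_shift (a t : ℤ) : qt N (a + (N:ℤ) * t) = qt N a + t := by
  have hNz : (N:ℤ) ≠ 0 := by positivity
  have h1 := res_spec hN (a + (N:ℤ)*t)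
  rw [res_shift hN] at h1
  have h2 := res_spec hN a
  have key : (N:ℤ) * qt N (a + (N:ℤ)*t) = (N:ℤ) * (qt N a + t) := by
    rw [mul_add]; linarith
  exact mul_left_cancel₀ hNz key

lemma res_of_mem {i : ℕ} (h1 : 1 ≤ i) (h2 : i ≤ N) : res N (i : ℤ) = i :=
  (res_unique hN h1 h2 (by simp)).symm

lemma qt_of_mem {i : ℕ} (h1 : 1 ≤ i) (h2 : i ≤ N) : qt N (i : ℤ) = 0 := by
  have hNz : (N:ℤ) ≠ 0 := by positivity
  have h3 := res_spec hN (i : ℤ)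
  rw [res_of_mem hN h1 h2] at h3
  have : (N:ℤ) * qt N i = (N:ℤ) * 0 := by linarith
  exact mul_left_cancel₀ hNz this

lemma res_eq_iff_dvd (a b : ℤ) : res N a = res N b ↔ (N:ℤ) ∣ a - b := by
  constructor
  · intro h
    have ha := dvd_sub_res hN a
    have hb := dvd_sub_res hN b
    refine ⟨qt N a - qt N b, ?_⟩
    rw [h] at ha
    linarith [mul_sub (N:ℤ) (qt N a) (qt N b)]
  · intro ⟨t, ht⟩
    have : b + (N:ℤ)*t = a := by linarith
    rw [← this, res_shift hN]

section G

variable {L : Type*} [LieRing L] [LieAlgebra ℂ L]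

omit hN in
lemma sum_lie' {ι : Type*} (s : Finset ι) (f : ι → L) (y : L) :
    ⁅∑ i ∈ s, f i, y⁆ = ∑ i ∈ s, ⁅f i, y⁆ :=
  map_sum (⟨⟨fun x => ⁅x, y⁆, zero_lie y⟩, fun a b => add_lie a b y⟩ : L →+ L) f s

omit hN in
lemma lie_sum' {ι : Type*} (s : Finset ι) (f : ι → L) (y : L) :
    ⁅y, ∑ i ∈ s, f i⁆ = ∑ i ∈ s, ⁅y, f i⁆ :=
  map_sum (⟨⟨fun x => ⁅y, x⁆, lie_zero y⟩, fun a b => lie_add y a b⟩ : L →+ L) f s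

/-- `G a b = E^{ρ(a),ρ(b)}_{q(b)-q(a)}`: the shift-matrix picture of `ĝl_N`. -/
def G (N : ℕ) (E : ℕ → ℕ → ℤ → L) (a b : ℤ) : L :=
  E (res N a) (res N b) (qt N b - qt N a)

lemma G_shift (E : ℕ → ℕ → ℤ → L) (a b t : ℤ) :
    G N E (a + (N:ℤ)*t) (b + (N:ℤ)*t) = G N E a b := by
  unfold G
  rw [res_shift hN, res_shift hN, qt_shift hN, qt_shift hN]
  ring_nf

variable (E : ℕ → ℕ → ℤ → L) (K : L)
  (hbrak : ∀ i j i' j' : ℕ, 1 ≤ i → i ≤ N → 1 ≤ j → j ≤ N →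
      1 ≤ i' → i' ≤ N → 1 ≤ j' → j' ≤ N → ∀ n m : ℤ,
      ⁅E i j n, E i' j' m⁆ =
        (if j = i' then E i j' (n + m) else 0) - (if i = j' then E i' j (n + m) else 0) +
          (if i = j' ∧ j = i' ∧ n + m = 0 then (n : ℂ) • K else 0))

include hbrak in
lemma G_brak (a b c d : ℤ) :
    ⁅G N E a b, G N E c d⁆ =
      (if (N:ℤ) ∣ b - c then G N E a (d + (b - c)) else 0)
      - (if (N:ℤ) ∣ a - d then G N E (c + (a - d)) b else 0)
      + (if ((N:ℤ) ∣ b - c) ∧ b - c = a - d then (((qt N b - qt N a : ℤ)) : ℂ) • K else 0) := by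
  have hNz : (N:ℤ) ≠ 0 := by positivity
  unfold G
  rw [hbrak _ _ _ _ (one_le_res _) (res_le hN _) (one_le_res _) (res_le hN _)
    (one_le_res _) (res_le hN _) (one_le_res _) (res_le hN _)]
  have qdiff : ∀ u v : ℤ, res N u = res N v → u - v = (N:ℤ) * (qt N u - qt N v) := by
    intro u v huv
    have hu := dvd_sub_res hN u
    have hv := dvd_sub_res hN v
    rw [huv] at hu
    rw [mul_sub]
    linarith
  have e1 : (if res N b = res N c then E (res N a) (res N d) (qt N b - qt N a + (qt N d - qt N c)) else 0)
      = (if (N:ℤ) ∣ b - c then G N E a (d + (b - c)) else 0) := by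
    by_cases h : (N:ℤ) ∣ b - c
    · have hbc : res N b = res N c := (res_eq_iff_dvd hN b c).2 h
      rw [if_pos hbc, if_pos h]
      have ht : b - c = (N:ℤ) * (qt N b - qt N c) := qdiff b c hbc
      unfold G
      rw [show d + (b - c) = d + (N:ℤ) * (qt N b - qt N c) from by rw [← ht],
        res_shift hN, qt_shift hN]
      congr 1
      ring
    · rw [if_neg (fun hc => h ((res_eq_iff_dvd hN b c).1 hc)), if_neg h]
  have e2 : (if res N a = res N d then E (res N c) (res N b) (qt N b - qt N a + (qt N d - qt N c)) else 0)
      = (if (N:ℤ) ∣ a - d then G N E (c + (a - d)) b else 0) := by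
    by_cases h : (N:ℤ) ∣ a - d
    · have had : res N a = res N d := (res_eq_iff_dvd hN a d).2 h
      rw [if_pos had, if_pos h]
      have ht : a - d = (N:ℤ) * (qt N a - qt N d) := qdiff a d had
      unfold G
      rw [show c + (a - d) = c + (N:ℤ) * (qt N a - qt N d) from by rw [← ht],
        res_shift hN, qt_shift hN]
      congr 1
      ring
    · rw [if_neg (fun hc => h ((res_eq_iff_dvd hN a d).1 hc)), if_neg h]
  have e3 : (if res N a = res N d ∧ res N b = res N c ∧ qt N b - qt N a + (qt N d - qt N c) = 0
        then ((qt N b - qt N a : ℤ) : ℂ) • K else 0)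
      = (if ((N:ℤ) ∣ b - c) ∧ b - c = a - d then ((qt N b - qt N a : ℤ) : ℂ) • K else 0) := by
    congr 1
    rw [eq_iff_iff]
    constructor
    · rintro ⟨had, hbc, hq⟩
      refine ⟨(res_eq_iff_dvd hN b c).1 hbc, ?_⟩
      have h1 := qdiff b c hbc
      have h2 := qdiff a d had
      have hq' : (N:ℤ) * (qt N b - qt N a + (qt N d - qt N c)) = 0 := by rw [hq]; ring
      ring_nf at h1 h2 hq' ⊢
      linarith
    · rintro ⟨hd1, heq⟩
      have hbc : res N b = res N c := (res_eq_iff_dvd hN b c).2 hd1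
      have had : res N a = res N d := (res_eq_iff_dvd hN a d).2 (heq ▸ hd1)
      refine ⟨had, hbc, ?_⟩
      have h1 := qdiff b c hbc
      have h2 := qdiff a d had
      rw [h1] at heq
      rw [h2] at heq
      have : (N:ℤ) * (qt N b - qt N a + (qt N d - qt N c)) = (N:ℤ) * 0 := by
        rw [mul_sub] at *
        ring_nf
        ring_nf at heq
        linarith
      have := mul_left_cancel₀ hNz this
      linarith
  rw [e1, e2, e3]
  unfold G
  rfl

omit hN in
lemma tele {M : Type*} [AddCommGroup M] [Module ℂ M] (f : ℕ → ℂ) (g : ℕ → M) (n : ℕ) :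
    ∑ i ∈ Finset.Icc 1 n, f i • (g i - g (i+1)) =
      (∑ i ∈ Finset.Icc 1 (n+1), (f i - f (i-1)) • g i) + f 0 • g 1 - f (n+1) • g (n+1) := by
  induction n with
  | zero =>
    simp [sub_smul]
    try abel
  | succ k ih =>
    rw [Finset.sum_Icc_succ_top (by omega), ih, Finset.sum_Icc_succ_top (by omega : 1 ≤ k+1+1)]
    simp only [Nat.add_sub_cancel]
    rw [smul_sub, sub_smul]
    abel

variable {ω : ℂ} (hprim : IsPrimitiveRoot ω N)

include hprim in
lemma omega_zpow_eq {a b : ℤ} (hd : (N:ℤ) ∣ a - b) : ω ^ a = ω ^ b := by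
  have hω0 : ω ≠ 0 := hprim.ne_zero hN.ne'
  have h1 : ω ^ (a - b) = 1 := (hprim.zpow_eq_one_iff_dvd _).2 hd
  calc ω ^ a = ω ^ (b + (a - b)) := by congr 1; ring
    _ = ω ^ b * ω ^ (a-b) := zpow_add₀ hω0 _ _
    _ = ω ^ b := by rw [h1, mul_one]

include hprim in
lemma xEl_eq (μ : ℤ) (hμ : ¬ (N:ℤ) ∣ μ) (n : ℤ) :
    xEl N ω E K μ n =
      (∑ i ∈ Finset.Icc 1 N, ω ^ (μ * ((i:ℤ) + n - 1)) • G N E (i:ℤ) ((i:ℤ)+n))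
      - (if n = 0 then (1/(1 - ω ^ μ)) • K else 0) := by
  have hω0 : ω ≠ 0 := hprim.ne_zero hN.ne'
  have hωμ : ω ^ μ ≠ 1 := fun h => hμ (by exact_mod_cast (hprim.zpow_eq_one_iff_dvd μ).1 h)
  have hNz : (N:ℤ) ≠ 0 := by positivity
  have hr0 : (0:ℤ) ≤ n % (N:ℤ) := Int.emod_nonneg n hNz
  have hrlt : ((n % (N:ℤ)).toNat) < N := by
    have := Int.emod_lt_of_pos n (show (0:ℤ) < N by exact_mod_cast hN)
    omega
  have hrcast : (((n % (N:ℤ)).toNat : ℤ)) = n % (N:ℤ) := Int.toNat_of_nonneg hr0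
  set q : ℤ := n / (N:ℤ) with hq
  set r : ℕ := (n % (N:ℤ)).toNat with hr
  have hn : n = (N:ℤ) * q + r := by
    have := Int.mul_ediv_add_emod n (N:ℤ)
    rw [hrcast, hq]; linarith
  by_cases h0 : n % (N:ℤ) = 0
  · -- diagonal case
    have hrz : r = 0 := by omega
    have hnq : n = (N:ℤ) * q := by rw [hn, hrz]; push_cast; ring
    rw [xEl, if_pos h0]
    have key : ∀ i:ℕ, 1 ≤ i → i ≤ N → G N E (i:ℤ) ((i:ℤ)+n) = E i i q := by
      intro i h1 h2
      unfold G
      rw [show (i:ℤ) + n = (i:ℤ) + (N:ℤ)*q from by rw [hnq]]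
      rw [res_shift hN, qt_shift hN, res_of_mem hN h1 h2, qt_of_mem hN h1 h2]
      rw [zero_add, sub_zero]
    congr 1
    rw [tele (fun i => (1 - ω ^ (μ * (i:ℤ))) / (1 - ω ^ μ)) (fun i => E i i q) (N-1)]
    have hN1 : N - 1 + 1 = N := by omega
    rw [hN1]
    have hf0 : ((1 : ℂ) - ω ^ (μ * ((0:ℕ):ℤ))) / (1 - ω ^ μ) = 0 := by
      rw [show μ * ((0:ℕ):ℤ) = 0 from by simp, zpow_zero]
      simp
    have hfN : ((1 : ℂ) - ω ^ (μ * ((N:ℕ):ℤ))) / (1 - ω ^ μ) = 0 := by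
      have : ω ^ (μ * (N:ℤ)) = ω ^ (0:ℤ) :=
        omega_zpow_eq hN hprim ⟨μ, by ring⟩
      rw [this]; norm_num
    beta_reduce
    rw [hf0, hfN, zero_smul, zero_smul, add_zero, sub_zero]
    refine Finset.sum_congr rfl ?_
    intro i hi
    rw [Finset.mem_Icc] at hi
    rw [key i hi.1 hi.2]
    congr 1
    have hic : (((i-1:ℕ)):ℤ) = (i:ℤ) - 1 := by omega
    have hsplit : ω ^ (μ * (i:ℤ)) = ω ^ (μ * ((i:ℤ)-1)) * ω ^ μ := by
      rw [← zpow_add₀ hω0]; congr 1; ring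
    have e1 : (1 - ω ^ (μ * (i:ℤ))) / (1 - ω ^ μ) - (1 - ω ^ (μ * (((i-1:ℕ)):ℤ))) / (1 - ω ^ μ)
        = ω ^ (μ * ((i:ℤ)-1)) := by
      have hd : (1:ℂ) - ω^μ ≠ 0 := sub_ne_zero.2 (Ne.symm hωμ)
      rw [hic, hsplit, div_sub_div_same, div_eq_iff hd]
      ring
    rw [e1]
    refine (omega_zpow_eq hN hprim ⟨μ * q, ?_⟩).symm
    linear_combination μ * hnq
  · -- off-diagonal case
    have hn0 : n ≠ 0 := fun h => h0 (by simp [h])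
    rw [xEl, if_neg h0, if_neg hn0, sub_zero]
    have h1r : 1 ≤ r := by omega
    have hsum : (∑ i ∈ Finset.Icc 1 (N-r), ω ^ (μ * ((i:ℤ) + n - 1)) • G N E (i:ℤ) ((i:ℤ)+n))
        + (∑ i ∈ Finset.Icc (N-r+1) N, ω ^ (μ * ((i:ℤ) + n - 1)) • G N E (i:ℤ) ((i:ℤ)+n))
        = ∑ i ∈ Finset.Icc 1 N, ω ^ (μ * ((i:ℤ) + n - 1)) • G N E (i:ℤ) ((i:ℤ)+n) := by
      rw [show Finset.Icc 1 (N-r) = Finset.Ioc 0 (N-r) from (Finset.Icc_add_one_left_eq_Ioc 0 _),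
          show Finset.Icc (N-r+1) N = Finset.Ioc (N-r) N from (Finset.Icc_add_one_left_eq_Ioc _ _),
          show Finset.Icc 1 N = Finset.Ioc 0 N from (Finset.Icc_add_one_left_eq_Ioc 0 _)]
      exact Finset.sum_Ioc_consecutive _ (Nat.zero_le _) (Nat.sub_le N r)
    rw [← hsum]
    congr 1
    · refine Finset.sum_congr rfl ?_
      intro i hi
      rw [Finset.mem_Icc] at hi
      obtain ⟨h1, h2⟩ := hi
      have key : G N E (i:ℤ) ((i:ℤ)+n) = E i (i+r) q := by
        unfold G
        rw [show (i:ℤ) + n = ((i+r:ℕ):ℤ) + (N:ℤ)*q from by rw [hn]; push_cast; ring]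
        rw [res_shift hN, qt_shift hN, res_of_mem hN (by omega) (by omega),
          res_of_mem hN (by omega : 1 ≤ i+r) (by omega : i+r ≤ N),
          qt_of_mem hN (by omega : 1 ≤ i) (by omega : i ≤ N),
          qt_of_mem hN (by omega : 1 ≤ i+r) (by omega : i+r ≤ N)]
        rw [zero_add, sub_zero]
      rw [key]
      congr 1
      refine omega_zpow_eq hN hprim ⟨-(μ * q), ?_⟩
      push_cast
      linear_combination (-μ) * hn
    · refine Finset.sum_congr rfl ?_
      intro i hi
      rw [Finset.mem_Icc] at hi
      obtain ⟨h1, h2⟩ := hi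
      have key : G N E (i:ℤ) ((i:ℤ)+n) = E i (i+r-N) (q+1) := by
        unfold G
        rw [show (i:ℤ) + n = ((i+r-N:ℕ):ℤ) + (N:ℤ)*(q+1) from by
            rw [hn]; push_cast [(by omega : N ≤ i + r)]; ring]
        rw [res_shift hN, qt_shift hN, res_of_mem hN (by omega) (by omega),
          res_of_mem hN (by omega : 1 ≤ i+r-N) (by omega : i+r-N ≤ N),
          qt_of_mem hN (by omega : 1 ≤ i) (by omega : i ≤ N),
          qt_of_mem hN (by omega : 1 ≤ i+r-N) (by omega : i+r-N ≤ N)]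
        rw [zero_add, sub_zero]
      rw [key]
      congr 1
      refine omega_zpow_eq hN hprim ⟨-(μ * q), ?_⟩
      push_cast
      linear_combination (-μ) * hn

omit hN in
lemma geom_Icc {ω : ℂ} (σ : ℤ) (hσ : ω ^ σ ≠ 1) (M : ℕ) :
    ∑ i ∈ Finset.Icc 1 M, ω ^ (σ * ((i:ℤ) - 1)) = ((ω ^ σ) ^ M - 1) / (ω ^ σ - 1) := by
  induction M with
  | zero => simp
  | succ k ih =>
    rw [Finset.sum_Icc_succ_top (by omega), ih]
    have h1 : ω ^ (σ * (((k+1:ℕ):ℤ) - 1)) = (ω ^ σ) ^ k := by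
      rw [show σ * (((k+1:ℕ):ℤ) - 1) = σ * (k:ℤ) from by push_cast; ring, zpow_mul,
        zpow_natCast]
    rw [h1]
    have hd : ω ^ σ - 1 ≠ 0 := sub_ne_zero.2 hσ
    field_simp
    ring

include hprim in
lemma sum_qt (σ : ℤ) (hσ : ¬ (N:ℤ) ∣ σ) (n : ℤ) :
    ∑ i ∈ Finset.Icc 1 N, ω ^ (σ * ((i:ℤ) - 1)) * ((qt N ((i:ℤ) + n) : ℤ) : ℂ)
      = (ω ^ (-(σ * n)) - 1) / (1 - ω ^ σ) := by
  have hω0 : ω ≠ 0 := hprim.ne_zero hN.ne'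
  have hσ1 : ω ^ σ ≠ 1 := fun h => hσ (by exact_mod_cast (hprim.zpow_eq_one_iff_dvd σ).1 h)
  have hNz : (N:ℤ) ≠ 0 := by positivity
  have hr0 : (0:ℤ) ≤ n % (N:ℤ) := Int.emod_nonneg n hNz
  have hrlt : ((n % (N:ℤ)).toNat) < N := by
    have := Int.emod_lt_of_pos n (show (0:ℤ) < N by exact_mod_cast hN)
    omega
  have hrcast : (((n % (N:ℤ)).toNat : ℤ)) = n % (N:ℤ) := Int.toNat_of_nonneg hr0
  set a : ℤ := n / (N:ℤ) with ha
  set r : ℕ := (n % (N:ℤ)).toNat with hr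
  have hn : n = (N:ℤ) * a + r := by
    have := Int.mul_ediv_add_emod n (N:ℤ)
    rw [hrcast, ha]; linarith
  have hsplit : (∑ i ∈ Finset.Icc 1 (N-r), ω ^ (σ * ((i:ℤ) - 1)) * ((qt N ((i:ℤ) + n) : ℤ) : ℂ))
      + (∑ i ∈ Finset.Icc (N-r+1) N, ω ^ (σ * ((i:ℤ) - 1)) * ((qt N ((i:ℤ) + n) : ℤ) : ℂ))
      = ∑ i ∈ Finset.Icc 1 N, ω ^ (σ * ((i:ℤ) - 1)) * ((qt N ((i:ℤ) + n) : ℤ) : ℂ) := by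
    rw [show Finset.Icc 1 (N-r) = Finset.Ioc 0 (N-r) from (Finset.Icc_add_one_left_eq_Ioc 0 _),
        show Finset.Icc (N-r+1) N = Finset.Ioc (N-r) N from (Finset.Icc_add_one_left_eq_Ioc _ _),
        show Finset.Icc 1 N = Finset.Ioc 0 N from (Finset.Icc_add_one_left_eq_Ioc 0 _)]
    exact Finset.sum_Ioc_consecutive _ (Nat.zero_le _) (Nat.sub_le N r)
  rw [← hsplit]
  have e1 : (∑ i ∈ Finset.Icc 1 (N-r), ω ^ (σ * ((i:ℤ) - 1)) * ((qt N ((i:ℤ) + n) : ℤ) : ℂ))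
      = (a : ℂ) * ∑ i ∈ Finset.Icc 1 (N-r), ω ^ (σ * ((i:ℤ) - 1)) := by
    rw [Finset.mul_sum]
    refine Finset.sum_congr rfl fun i hi => ?_
    rw [Finset.mem_Icc] at hi
    have hq : qt N ((i:ℤ) + n) = a := by
      rw [show (i:ℤ) + n = ((i+r:ℕ):ℤ) + (N:ℤ)*a from by rw [hn]; push_cast; ring,
        qt_shift hN, qt_of_mem hN (by omega : 1 ≤ i+r) (by omega : i+r ≤ N), zero_add]
    rw [hq]; ring
  have e2 : (∑ i ∈ Finset.Icc (N-r+1) N, ω ^ (σ * ((i:ℤ) - 1)) * ((qt N ((i:ℤ) + n) : ℤ) : ℂ))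
      = ((a : ℂ) + 1) * ∑ i ∈ Finset.Icc (N-r+1) N, ω ^ (σ * ((i:ℤ) - 1)) := by
    rw [Finset.mul_sum]
    refine Finset.sum_congr rfl fun i hi => ?_
    rw [Finset.mem_Icc] at hi
    have hq : qt N ((i:ℤ) + n) = a + 1 := by
      rw [show (i:ℤ) + n = ((i+r-N:ℕ):ℤ) + (N:ℤ)*(a+1) from by
          rw [hn]; push_cast [(by omega : N ≤ i + r)]; ring,
        qt_shift hN, qt_of_mem hN (by omega : 1 ≤ i+r-N) (by omega : i+r-N ≤ N), zero_add]
    rw [hq]; push_cast; ring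
  rw [e1, e2]
  have hg12 : (∑ i ∈ Finset.Icc 1 (N-r), ω ^ (σ * ((i:ℤ) - 1)))
      + (∑ i ∈ Finset.Icc (N-r+1) N, ω ^ (σ * ((i:ℤ) - 1)))
      = ∑ i ∈ Finset.Icc 1 N, ω ^ (σ * ((i:ℤ) - 1)) := by
    rw [show Finset.Icc 1 (N-r) = Finset.Ioc 0 (N-r) from (Finset.Icc_add_one_left_eq_Ioc 0 _),
        show Finset.Icc (N-r+1) N = Finset.Ioc (N-r) N from (Finset.Icc_add_one_left_eq_Ioc _ _),
        show Finset.Icc 1 N = Finset.Ioc 0 N from (Finset.Icc_add_one_left_eq_Ioc 0 _)]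
    exact Finset.sum_Ioc_consecutive _ (Nat.zero_le _) (Nat.sub_le N r)
  have hfullN : (∑ i ∈ Finset.Icc 1 N, ω ^ (σ * ((i:ℤ) - 1))) = 0 := by
    rw [geom_Icc σ hσ1]
    have : (ω ^ σ) ^ N = 1 := by
      rw [← zpow_natCast (ω ^ σ) N, ← zpow_mul]
      exact (hprim.zpow_eq_one_iff_dvd _).2 ⟨σ, by ring⟩
    rw [this]; simp
  have hg1 : (∑ i ∈ Finset.Icc 1 (N-r), ω ^ (σ * ((i:ℤ) - 1)))
      = ((ω ^ σ) ^ (N-r) - 1) / (ω ^ σ - 1) := geom_Icc σ hσ1 _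
  have hg2 : (∑ i ∈ Finset.Icc (N-r+1) N, ω ^ (σ * ((i:ℤ) - 1)))
      = -(((ω ^ σ) ^ (N-r) - 1) / (ω ^ σ - 1)) := by
    have := hg12
    rw [hfullN, hg1] at this
    linear_combination this
  rw [hg1, hg2]
  have hpow : (ω ^ σ) ^ (N - r) = ω ^ (-(σ * n)) := by
    rw [← zpow_natCast (ω ^ σ) (N-r), ← zpow_mul]
    refine omega_zpow_eq hN hprim ⟨σ * (a+1), ?_⟩
    push_cast [Nat.cast_sub hrlt.le]
    linear_combination σ * hn
  rw [← hpow]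
  rw [show ((1:ℂ) - ω^σ) = -(ω^σ - 1) from by ring, div_neg]
  ring

end G
end XXC

open XXC in
/-- The principal current relations of `ĝl_N` for `μ + ν ≢ 0 mod N`:
`[x^{(μ)}_n, x^{(ν)}_m] = (ω^{-μm} - ω^{-νn}) x^{(μ+ν)}_{n+m}`,
where the superscript `μ+ν` is taken mod `N` with representative in `{1,…,N-1}`. -/
theorem x_x_comm {L : Type*} [LieRing L] [LieAlgebra ℂ L]
    (N : ℕ) (hN : 2 ≤ N) (ω : ℂ) (hω : ω = Complex.exp (2 * Real.pi * Complex.I / N))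
    (E : ℕ → ℕ → ℤ → L) (K : L)
    (hcent : ∀ x : L, ⁅K, x⁆ = 0)
    (hbrak : ∀ i j i' j' : ℕ, 1 ≤ i → i ≤ N → 1 ≤ j → j ≤ N →
      1 ≤ i' → i' ≤ N → 1 ≤ j' → j' ≤ N → ∀ n m : ℤ,
      ⁅E i j n, E i' j' m⁆ =
        (if j = i' then E i j' (n + m) else 0) - (if i = j' then E i' j (n + m) else 0) +
          (if i = j' ∧ j = i' ∧ n + m = 0 then (n : ℂ) • K else 0))
    (μ ν : ℤ) (hμ1 : 1 ≤ μ) (hμ2 : μ ≤ (N : ℤ) - 1) (hν1 : 1 ≤ ν) (hν2 : ν ≤ (N : ℤ) - 1)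
    (hμν : μ + ν ≠ (N : ℤ)) (n m : ℤ) :
    ⁅xEl N ω E K μ n, xEl N ω E K ν m⁆ =
      (ω ^ (-(μ * m)) - ω ^ (-(ν * n))) •
        xEl N ω E K (if μ + ν < (N : ℤ) then μ + ν else μ + ν - N) (n + m) := by
  classical
  have hN0 : 0 < N := by omega
  have hprim : IsPrimitiveRoot ω N := by
    rw [hω]; exact Complex.isPrimitiveRoot_exp N (by omega)
  have hω0 : ω ≠ 0 := hprim.ne_zero hN0.ne'
  have hNz : (N:ℤ) ≠ 0 := by positivity
  have hndvd : ∀ σ : ℤ, 1 ≤ σ → σ < 2*N → σ ≠ N → ¬ (N:ℤ) ∣ σ := by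
    rintro σ h1 h2 h3 ⟨t, ht⟩
    have hNpos : (0:ℤ) < N := by exact_mod_cast hN0
    have ht1 : 1 ≤ t := by nlinarith
    have ht2 : t ≤ 1 := by nlinarith
    exact h3 (by rw [ht, le_antisymm ht2 ht1, mul_one])
  set lam : ℤ := if μ + ν < (N:ℤ) then μ + ν else μ + ν - N with hlam
  have hlam_or : lam = μ + ν ∨ lam = μ + ν - N := by
    rw [hlam]; split
    · left; rfl
    · right; rfl
  have hμd : ¬(N:ℤ) ∣ μ := hndvd μ hμ1 (by omega) (by omega)
  have hνd : ¬(N:ℤ) ∣ ν := hndvd ν hν1 (by omega) (by omega)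
  have hlam_lb : 1 ≤ lam := by rw [hlam]; split <;> omega
  have hlam_ub : lam < 2*N := by rw [hlam]; split <;> omega
  have hlam_ne : lam ≠ N := by rw [hlam]; split <;> omega
  have hlamd : ¬(N:ℤ) ∣ lam := hndvd lam hlam_lb hlam_ub hlam_ne
  obtain ⟨w, hw⟩ : (N:ℤ) ∣ lam - (μ + ν) := by
    rcases hlam_or with h|h
    · rw [h]; simp
    · rw [h]; exact ⟨-1, by ring⟩
  rw [xEl_eq hN0 E K hprim μ hμd n, xEl_eq hN0 E K hprim ν hνd m,
      xEl_eq hN0 E K hprim lam hlamd (n+m)]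
  have hKr : ∀ x : L, ⁅x, K⁆ = 0 := fun x => by rw [← lie_skew, hcent, neg_zero]
  have hD1 : ∀ x : L, ⁅(if n = 0 then (1/(1-ω^μ)) • K else 0 : L), x⁆ = 0 := by
    intro x; split
    · rw [smul_lie, hcent, smul_zero]
    · rw [zero_lie]
  have hD2 : ∀ x : L, ⁅x, (if m = 0 then (1/(1-ω^ν)) • K else 0 : L)⁆ = 0 := by
    intro x; split
    · rw [lie_smul, hKr, smul_zero]
    · rw [lie_zero]
  rw [sub_lie, lie_sub, hD1, hD2, sub_zero, sub_zero]
  -- expand the double sum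
  rw [sum_lie']
  have expand : ∀ i : ℕ,
      ⁅ω ^ (μ * ((i:ℤ) + n - 1)) • G N E (i:ℤ) ((i:ℤ)+n),
        ∑ j ∈ Finset.Icc 1 N, ω ^ (ν * ((j:ℤ) + m - 1)) • G N E (j:ℤ) ((j:ℤ)+m)⁆
      = ∑ j ∈ Finset.Icc 1 N,
          (ω ^ (μ * ((i:ℤ) + n - 1)) * ω ^ (ν * ((j:ℤ) + m - 1))) •
            ⁅G N E (i:ℤ) ((i:ℤ)+n), G N E (j:ℤ) ((j:ℤ)+m)⁆ := by
    intro i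
    rw [smul_lie, lie_sum', Finset.smul_sum]
    refine Finset.sum_congr rfl fun j _ => ?_
    rw [lie_smul, smul_smul]
  simp only [expand]
  -- apply G_brak and distribute
  have gb := G_brak hN0 E K hbrak
  have split3 : (∑ i ∈ Finset.Icc 1 N, ∑ j ∈ Finset.Icc 1 N,
      (ω ^ (μ * ((i:ℤ) + n - 1)) * ω ^ (ν * ((j:ℤ) + m - 1))) •
        ⁅G N E (i:ℤ) ((i:ℤ)+n), G N E (j:ℤ) ((j:ℤ)+m)⁆)
      = (∑ i ∈ Finset.Icc 1 N, ∑ j ∈ Finset.Icc 1 N,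
          (ω ^ (μ * ((i:ℤ) + n - 1)) * ω ^ (ν * ((j:ℤ) + m - 1))) •
            (if (N:ℤ) ∣ ((i:ℤ)+n) - (j:ℤ) then G N E (i:ℤ) (((j:ℤ)+m) + (((i:ℤ)+n) - (j:ℤ))) else 0))
      - (∑ i ∈ Finset.Icc 1 N, ∑ j ∈ Finset.Icc 1 N,
          (ω ^ (μ * ((i:ℤ) + n - 1)) * ω ^ (ν * ((j:ℤ) + m - 1))) •
            (if (N:ℤ) ∣ (i:ℤ) - ((j:ℤ)+m) then G N E ((j:ℤ) + ((i:ℤ) - ((j:ℤ)+m))) ((i:ℤ)+n) else 0))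
      + (∑ i ∈ Finset.Icc 1 N, ∑ j ∈ Finset.Icc 1 N,
          (ω ^ (μ * ((i:ℤ) + n - 1)) * ω ^ (ν * ((j:ℤ) + m - 1))) •
            (if ((N:ℤ) ∣ ((i:ℤ)+n) - (j:ℤ)) ∧ ((i:ℤ)+n) - (j:ℤ) = (i:ℤ) - ((j:ℤ)+m)
              then ((qt N ((i:ℤ)+n) - qt N (i:ℤ) : ℤ) : ℂ) • K else 0)) := by
    rw [← Finset.sum_sub_distrib, ← Finset.sum_add_distrib]
    refine Finset.sum_congr rfl fun i _ => ?_
    rw [← Finset.sum_sub_distrib, ← Finset.sum_add_distrib]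
    refine Finset.sum_congr rfl fun j _ => ?_
    rw [gb, smul_add, smul_sub]
  rw [split3]
  -- evaluate the three sums
  have T1 : (∑ i ∈ Finset.Icc 1 N, ∑ j ∈ Finset.Icc 1 N,
        (ω ^ (μ * ((i:ℤ) + n - 1)) * ω ^ (ν * ((j:ℤ) + m - 1))) •
          (if (N:ℤ) ∣ ((i:ℤ)+n) - (j:ℤ) then G N E (i:ℤ) (((j:ℤ)+m) + (((i:ℤ)+n) - (j:ℤ))) else 0))
      = ∑ i ∈ Finset.Icc 1 N,
          (ω ^ (-(μ*m)) * ω ^ (lam * ((i:ℤ) + (n+m) - 1))) • G N E (i:ℤ) ((i:ℤ)+(n+m)) := by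
    refine Finset.sum_congr rfl fun i hi => ?_
    rw [Finset.mem_Icc] at hi
    set j₀ : ℕ := res N ((i:ℤ)+n) with hj₀
    have hj₀mem : j₀ ∈ Finset.Icc 1 N :=
      Finset.mem_Icc.2 ⟨one_le_res _, res_le hN0 _⟩
    have hsub : ((i:ℤ)+n) - (j₀:ℤ) = (N:ℤ) * qt N ((i:ℤ)+n) := dvd_sub_res hN0 _
    rw [Finset.sum_eq_single_of_mem j₀ hj₀mem (fun j hj hne => ?_)]
    · rw [if_pos ⟨_, hsub⟩,
        show ((j₀:ℤ)+m) + (((i:ℤ)+n) - (j₀:ℤ)) = (i:ℤ)+(n+m) from by ring]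
      congr 1
      have hb : ω ^ (ν * ((j₀:ℤ) + m - 1)) = ω ^ (ν * (((i:ℤ)+n) + m - 1)) := by
        refine omega_zpow_eq hN0 hprim ⟨-(ν * qt N ((i:ℤ)+n)), ?_⟩
        linear_combination (-ν) * hsub
      rw [hb, ← zpow_add₀ hω0, ← zpow_add₀ hω0]
      refine omega_zpow_eq hN0 hprim ⟨-(w * ((i:ℤ)+n+m-1)), ?_⟩
      linear_combination (-((i:ℤ)+n+m-1)) * hw
    · rw [Finset.mem_Icc] at hj
      rw [if_neg, smul_zero]
      intro hdvd
      exact hne (res_unique hN0 hj.1 hj.2 hdvd)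
  have T2 : (∑ i ∈ Finset.Icc 1 N, ∑ j ∈ Finset.Icc 1 N,
        (ω ^ (μ * ((i:ℤ) + n - 1)) * ω ^ (ν * ((j:ℤ) + m - 1))) •
          (if (N:ℤ) ∣ (i:ℤ) - ((j:ℤ)+m) then G N E ((j:ℤ) + ((i:ℤ) - ((j:ℤ)+m))) ((i:ℤ)+n) else 0))
      = ∑ j ∈ Finset.Icc 1 N,
          (ω ^ (-(ν*n)) * ω ^ (lam * ((j:ℤ) + (n+m) - 1))) • G N E (j:ℤ) ((j:ℤ)+(n+m)) := by
    rw [Finset.sum_comm]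
    refine Finset.sum_congr rfl fun j hj => ?_
    rw [Finset.mem_Icc] at hj
    set i₀ : ℕ := res N ((j:ℤ)+m) with hi₀
    have hi₀mem : i₀ ∈ Finset.Icc 1 N :=
      Finset.mem_Icc.2 ⟨one_le_res _, res_le hN0 _⟩
    have hsub : ((j:ℤ)+m) - (i₀:ℤ) = (N:ℤ) * qt N ((j:ℤ)+m) := dvd_sub_res hN0 _
    rw [Finset.sum_eq_single_of_mem i₀ hi₀mem (fun i hi hne => ?_)]
    · rw [if_pos ⟨-(qt N ((j:ℤ)+m)), by linear_combination -hsub⟩]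
      rw [show ((j:ℤ) + ((i₀:ℤ) - ((j:ℤ)+m))) = (j:ℤ) + (N:ℤ) * (-(qt N ((j:ℤ)+m))) from by
          linear_combination -hsub,
        show ((i₀:ℤ)+n) = ((j:ℤ)+(n+m)) + (N:ℤ) * (-(qt N ((j:ℤ)+m))) from by
          linear_combination -hsub,
        G_shift hN0]
      congr 1
      rw [← zpow_add₀ hω0, ← zpow_add₀ hω0]
      refine omega_zpow_eq hN0 hprim ⟨-(w * ((j:ℤ)+n+m-1)) - μ * qt N ((j:ℤ)+m), ?_⟩
      linear_combination (-((j:ℤ)+n+m-1)) * hw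
    · rw [Finset.mem_Icc] at hi
      rw [if_neg, smul_zero]
      intro hdvd
      refine hne (res_unique hN0 hi.1 hi.2 ?_)
      obtain ⟨t, ht⟩ := hdvd
      exact ⟨-t, by linarith⟩
  have T3 : (∑ i ∈ Finset.Icc 1 N, ∑ j ∈ Finset.Icc 1 N,
        (ω ^ (μ * ((i:ℤ) + n - 1)) * ω ^ (ν * ((j:ℤ) + m - 1))) •
          (if ((N:ℤ) ∣ ((i:ℤ)+n) - (j:ℤ)) ∧ ((i:ℤ)+n) - (j:ℤ) = (i:ℤ) - ((j:ℤ)+m)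
            then ((qt N ((i:ℤ)+n) - qt N (i:ℤ) : ℤ) : ℂ) • K else 0))
      = -((ω ^ (-(μ * m)) - ω ^ (-(ν * n))) •
          (if n + m = 0 then (1/(1 - ω ^ lam)) • K else 0)) := by
    by_cases hnm : n + m = 0
    · rw [if_pos hnm]
      have step : ∀ i ∈ Finset.Icc 1 N, (∑ j ∈ Finset.Icc 1 N,
          (ω ^ (μ * ((i:ℤ) + n - 1)) * ω ^ (ν * ((j:ℤ) + m - 1))) •
            (if ((N:ℤ) ∣ ((i:ℤ)+n) - (j:ℤ)) ∧ ((i:ℤ)+n) - (j:ℤ) = (i:ℤ) - ((j:ℤ)+m)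
              then ((qt N ((i:ℤ)+n) - qt N (i:ℤ) : ℤ) : ℂ) • K else 0))
          = (ω ^ (-(μ*m)) * ω ^ (lam * ((i:ℤ) - 1)) * ((qt N ((i:ℤ)+n) : ℤ) : ℂ)) • K := by
        intro i hi
        rw [Finset.mem_Icc] at hi
        set j₀ : ℕ := res N ((i:ℤ)+n) with hj₀
        have hj₀mem : j₀ ∈ Finset.Icc 1 N :=
          Finset.mem_Icc.2 ⟨one_le_res _, res_le hN0 _⟩
        have hsub : ((i:ℤ)+n) - (j₀:ℤ) = (N:ℤ) * qt N ((i:ℤ)+n) := dvd_sub_res hN0 _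
        rw [Finset.sum_eq_single_of_mem j₀ hj₀mem (fun j hj hne => ?_)]
        · rw [if_pos ⟨⟨_, hsub⟩, by omega⟩, qt_of_mem hN0 hi.1 hi.2, sub_zero, smul_smul]
          congr 1
          have hb : ω ^ (ν * ((j₀:ℤ) + m - 1)) = ω ^ (ν * (((i:ℤ)+n) + m - 1)) := by
            refine omega_zpow_eq hN0 hprim ⟨-(ν * qt N ((i:ℤ)+n)), ?_⟩
            linear_combination (-ν) * hsub
          rw [hb, ← zpow_add₀ hω0, ← zpow_add₀ hω0]
          have : ω ^ (μ * ((i:ℤ) + n - 1) + ν * ((i:ℤ) + n + m - 1))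
              = ω ^ (-(μ * m) + lam * ((i:ℤ) - 1)) := by
            refine omega_zpow_eq hN0 hprim ⟨-(w * ((i:ℤ)-1)), ?_⟩
            have hm : m = -n := by omega
            rw [hm]
            linear_combination (-((i:ℤ)-1)) * hw
          rw [this]
        · rw [Finset.mem_Icc] at hj
          rw [if_neg, smul_zero]
          rintro ⟨hdvd, -⟩
          exact hne (res_unique hN0 hj.1 hj.2 hdvd)
      rw [Finset.sum_congr rfl step, ← Finset.sum_smul]
      have hscal : (∑ i ∈ Finset.Icc 1 N,
          ω ^ (-(μ*m)) * ω ^ (lam * ((i:ℤ) - 1)) * ((qt N ((i:ℤ)+n) : ℤ) : ℂ))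
          = ω ^ (-(μ*m)) * ((ω ^ (-(lam * n)) - 1) / (1 - ω ^ lam)) := by
        rw [← sum_qt hN0 hprim lam hlamd n, Finset.mul_sum]
        refine Finset.sum_congr rfl fun i _ => ?_
        ring
      rw [hscal]
      rw [smul_smul, ← neg_smul]
      congr 1
      have hβ : ω ^ (-(μ*m)) * ω ^ (-(lam * n)) = ω ^ (-(ν*n)) := by
        rw [← zpow_add₀ hω0]
        refine omega_zpow_eq hN0 hprim ⟨-(w * n), ?_⟩
        have hm : m = -n := by omega
        rw [hm]
        linear_combination (-n) * hw
      linear_combination ((1:ℂ)/(1 - ω ^ lam)) * hβ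
    · rw [if_neg hnm, smul_zero, neg_zero]
      refine Finset.sum_eq_zero fun i _ => Finset.sum_eq_zero fun j _ => ?_
      rw [if_neg, smul_zero]
      rintro ⟨-, habs⟩
      exact hnm (by omega)
  rw [T1, T2, T3]
  -- final algebra
  rw [smul_sub, Finset.smul_sum, sub_eq_add_neg]
  rw [← sub_eq_add_neg, ← sub_eq_add_neg]
  congr 1
  rw [← Finset.sum_sub_distrib]
  refine Finset.sum_congr rfl fun i _ => ?_
  rw [smul_smul, ← sub_smul, ← sub_mul]
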